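/- Let n be a positive integer and let S and T be finite subsets of ℚ^n. Then the intersection of the ℤ≥0-span of S with the ℤ≥0-span of T is a finite set if and only if the ℝ≥0-span of S and the ℝ≥0-span of T (inside ℝ^n) intersect only in the zero vector. -/

import Mathlib

/-- The ℤ≥0-span of a set `S ⊆ ℚ^n`: all finite sums `∑ aᵢ • sᵢ` with `aᵢ ∈ ℕ`, `sᵢ ∈ S`. -/
def zSpanQ {n : ℕ} (S : Set (Fin n → ℚ)) : Set (Fin n → ℚ) :=
  {x | ∃ (k : ℕ) (a : Fin k → ℕ) (s : Fin k → (Fin n → ℚ)),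
    (∀ i, s i ∈ S) ∧ x = ∑ i, (a i : ℚ) • s i}

/-- The inclusion `ℚ^n ⊆ ℝ^n`. -/
def ratToReal {n : ℕ} (v : Fin n → ℚ) : EuclideanSpace ℝ (Fin n) :=
  WithLp.toLp 2 (fun i => (v i : ℝ))

/-- The ℝ≥0-span of a set `S ⊆ ℚ^n`, viewed inside `ℝ^n`. -/
def rSpanQ {n : ℕ} (S : Set (Fin n → ℚ)) : Set (EuclideanSpace ℝ (Fin n)) :=
  {x | ∃ (k : ℕ) (a : Fin k → ℝ) (s : Fin k → (Fin n → ℚ)),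
    (∀ i, s i ∈ S) ∧ (∀ i, 0 ≤ a i) ∧ x = ∑ i, a i • ratToReal (s i)}

/-!
A nonzero point of both real cones is a nonnegative real solution `(c, d)` of the rational
linear system `∑ cᵢ sᵢ = ∑ dⱼ tⱼ`. Rational solutions are dense among the real ones with the same
support, so some nonnegative rational solution still has a nonzero common value `y`; clearing
denominators puts a multiple `N • y` into both ℤ≥0-spans, and with it every `m • N • y`.
Conversely the ℤ≥0-spans lie in the real cones and `ℚⁿ → ℝⁿ` is injective.
-/

open Matrix Module Submodule

theorem Matrix.mem_closure_ratCast_ker {κ ι : Type*} [Fintype ι] (A : Matrix κ ι ℚ)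
    {z : ι → ℝ} (hz : A.map (↑) *ᵥ z = 0) :
    z ∈ closure ((fun q i => (q i : ℝ)) '' {q | A *ᵥ q = 0}) := by
  -- expanding the coordinates of `z` in a ℚ-basis of their ℚ-span writes `z` as a real
  -- combination of the rational kernel vectors `c t`
  let V := span ℚ (Set.range z)
  have : FiniteDimensional ℚ V := .span_of_finite ℚ (Set.finite_range z)
  let b := finBasis ℚ V
  let ζ : ι → V := fun i => ⟨z i, subset_span (Set.mem_range_self i)⟩
  let c : Fin (finrank ℚ V) → ι → ℚ := fun t i => b.repr (ζ i) t
  have hc : ∀ t, A *ᵥ c t = 0 := by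
    intro t
    ext r
    have h0 : ∑ i, A r i • ζ i = 0 := by
      apply Subtype.coe_injective
      simpa [mulVec, dotProduct, Rat.smul_def] using congrFun hz r
    simpa [mulVec, dotProduct, c, Rat.smul_def] using congrArg (fun v => b.repr v t) h0
  let g : (Fin (finrank ℚ V) → ℝ) → ι → ℝ := fun r i => ∑ t, r t * c t i
  have hg : Continuous g := by fun_prop
  have hgb : g (fun t => b t) = z := by
    funext i
    have := congrArg Subtype.val (b.sum_repr (ζ i))
    simp only [coe_sum, coe_smul, Rat.smul_def] at this
    exact (Finset.sum_congr rfl fun t _ => mul_comm _ _).trans this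
  rw [← hgb]
  refine map_mem_closure hg ((DenseRange.piMap fun _ => Rat.denseRange_cast) _) ?_
  rintro _ ⟨p, rfl⟩
  refine ⟨∑ t, p t • c t, ?_, ?_⟩
  · simp only [Set.mem_ofPred_eq, mulVec_sum, mulVec_smul, hc, smul_zero,
      Finset.sum_const_zero]
  · funext i
    simp [g]

theorem Matrix.mem_closure_ratCast_nonneg_ker {κ ι : Type*} [Fintype ι]
    (A : Matrix κ ι ℚ) {z : ι → ℝ} (hz0 : 0 ≤ z) (hz : A.map (↑) *ᵥ z = 0) :
    z ∈ closure ((fun q i => (q i : ℝ)) '' {q | 0 ≤ q ∧ A *ᵥ q = 0}) := by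
  classical
  -- the extra rows force a rational approximation to vanish where `z` does
  let B := fromRows A (diagonal fun i => if z i = 0 then 1 else 0)
  have hBz : B.map (↑) *ᵥ z = 0 := by
    ext (r | i)
    · simpa [B, fromRows_map] using congrFun hz r
    · by_cases h : z i = 0 <;> simp [B, fromRows_map, diagonal_map, mulVec_diagonal, h]
  let P : Set (ι → ℝ) := ⋂ i ∈ {i | z i ≠ 0}, {w | 0 < w i}
  have hP : IsOpen P :=
    (Set.toFinite _).isOpen_biInter fun i _ => isOpen_lt continuous_const (continuous_apply i)
  have hzP : z ∈ P := Set.mem_iInter₂.2 fun i hi => (hz0 i).lt_of_ne' hi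
  refine closure_mono ?_ (hP.inter_closure ⟨hzP, B.mem_closure_ratCast_ker hBz⟩)
  rintro _ ⟨hqP, q, hq, rfl⟩
  refine ⟨q, ⟨fun i => show 0 ≤ q i from ?_, ?_⟩, rfl⟩
  · by_cases h : z i = 0
    · simpa [B, mulVec_diagonal, h] using (congrFun hq (Sum.inr i)).ge
    · have : (0 : ℝ) < q i := Set.mem_iInter₂.1 hqP i h
      exact_mod_cast this.le
  · ext r
    simpa [B] using congrFun hq (Sum.inl r)

theorem zSpanQ_eq_span_nat {n : ℕ} (S : Set (Fin n → ℚ)) : zSpanQ S = span ℕ S := by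
  ext x
  rw [SetLike.mem_coe, mem_span_set']
  constructor
  · rintro ⟨k, a, s, hs, rfl⟩
    exact ⟨k, a, fun i => ⟨s i, hs i⟩, by simp [Nat.cast_smul_eq_nsmul]⟩
  · rintro ⟨k, a, g, rfl⟩
    exact ⟨k, a, fun i => g i, fun i => (g i).2, by simp [Nat.cast_smul_eq_nsmul]⟩

theorem exists_nsmul_mem_span_nat_of_mem_span_nnrat {M : Type*} [AddCommMonoid M] [Module ℚ≥0 M]
    {S : Set M} {x : M} (hx : x ∈ span ℚ≥0 S) : ∃ N : ℕ, 0 < N ∧ N • x ∈ span ℕ S := by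
  induction hx using span_induction with
  | mem x hx => exact ⟨1, one_pos, by simpa using subset_span hx⟩
  | zero => exact ⟨1, one_pos, by simp⟩
  | add x y _ _ hx hy =>
    obtain ⟨N, hN, hNx⟩ := hx
    obtain ⟨L, hL, hLy⟩ := hy
    refine ⟨N * L, mul_pos hN hL, ?_⟩
    rw [smul_add, mul_comm, mul_smul, mul_comm, mul_smul]
    exact add_mem (smul_mem _ _ hNx) (smul_mem _ _ hLy)
  | smul c x _ hx =>
    obtain ⟨N, hN, hNx⟩ := hx
    refine ⟨c.den * N, mul_pos c.den_pos hN, ?_⟩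
    have : (c.den * N) • c • x = c.num • N • x := by
      rw [mul_smul, smul_comm N, ← Nat.cast_smul_eq_nsmul ℚ≥0 c.den, smul_smul,
        NNRat.den_mul_eq_num, Nat.cast_smul_eq_nsmul]
    rw [this]
    exact smul_mem _ _ hNx

theorem infinite_span_nat_inter_of_mem_span_nnrat {M : Type*} [AddCommGroup M] [Module ℚ≥0 M]
    [IsAddTorsionFree M] {S T : Set M} {y : M} (hy : y ≠ 0) (hyS : y ∈ span ℚ≥0 S)
    (hyT : y ∈ span ℚ≥0 T) : ((span ℕ S ⊓ span ℕ T : Submodule ℕ M) : Set M).Infinite := by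
  obtain ⟨N, hN, hNS⟩ := exists_nsmul_mem_span_nat_of_mem_span_nnrat hyS
  obtain ⟨L, hL, hLT⟩ := exists_nsmul_mem_span_nat_of_mem_span_nnrat hyT
  have hmem : (L * N) • y ∈ span ℕ S ⊓ span ℕ T := by
    refine ⟨?_, ?_⟩
    · rw [mul_smul]; exact smul_mem _ _ hNS
    · rw [mul_comm, mul_smul]; exact smul_mem _ _ hLT
  have hne : (L * N) • y ≠ 0 := smul_ne_zero (mul_pos hL hN).ne' hy
  have hinj : Function.Injective fun m : ℕ => m • (L * N) • y := fun a b hab => by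
    exact_mod_cast smul_left_injective ℤ hne (show (a : ℤ) • _ = (b : ℤ) • _ by
      simpa only [natCast_zsmul] using hab)
  exact Set.infinite_of_injective_forall_mem hinj fun m => smul_mem _ m hmem

theorem ratToReal_sum_smul {n : ℕ} {ι : Type*} [Fintype ι] (c : ι → ℚ) (v : ι → Fin n → ℚ) :
    ratToReal (∑ i, c i • v i) = ∑ i, (c i : ℝ) • ratToReal (v i) := by
  ext j
  simp [ratToReal]

theorem ratToReal_eq_zero_iff {n : ℕ} {v : Fin n → ℚ} : ratToReal v = 0 ↔ v = 0 := by
  constructor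
  · intro h
    funext j
    simpa [ratToReal] using congrArg (· j) h
  · rintro rfl
    ext j
    simp [ratToReal]

theorem smul_mem_span_nnrat {κ : Type*} {S : Set (κ → ℚ)} {c : ℚ} (hc : 0 ≤ c) {v : κ → ℚ}
    (hv : v ∈ span ℚ≥0 S) : c • v ∈ span ℚ≥0 S := by
  have : c • v = c.toNNRat • v := by
    ext j
    simp [NNRat.smul_def, Rat.coe_toNNRat _ hc]
  exact this ▸ smul_mem _ _ hv

theorem exists_ne_zero_mem_span_nnrat_of_mem_rSpanQ {n : ℕ} {S T : Set (Fin n → ℚ)}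
    {x : EuclideanSpace ℝ (Fin n)} (hxS : x ∈ rSpanQ S) (hxT : x ∈ rSpanQ T) (hx0 : x ≠ 0) :
    ∃ y : Fin n → ℚ, y ≠ 0 ∧ y ∈ span ℚ≥0 S ∧ y ∈ span ℚ≥0 T := by
  obtain ⟨k, a, s, hs, ha, rfl⟩ := hxS
  obtain ⟨l, b, t, ht, hb, hx⟩ := hxT
  let A : Matrix (Fin n) (Fin k ⊕ Fin l) ℚ :=
    of fun j => Sum.elim (fun i => s i j) (fun i => -t i j)
  have hA : ∀ q, A *ᵥ q = 0 → ∑ i, q (.inl i) • s i = ∑ i, q (.inr i) • t i := by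
    intro q hq
    ext j
    have := congrFun hq j
    simp [A, mulVec, dotProduct, Fintype.sum_sum_type, mul_comm] at this ⊢
    linarith
  have hz : A.map (↑) *ᵥ Sum.elim a b = 0 := by
    ext j
    have := congrArg (· j) hx
    simp [A, mulVec, dotProduct, Fintype.sum_sum_type, ratToReal, mul_comm] at this ⊢
    linarith
  have hz0 : 0 ≤ Sum.elim a b := fun i => by cases i <;> simp [ha, hb]
  let U := {w : Fin k ⊕ Fin l → ℝ | ∑ i, w (.inl i) • ratToReal (s i) ≠ 0}
  have hU : IsOpen U := isOpen_ne_fun (by fun_prop) continuous_const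
  obtain ⟨_, hqU, q, ⟨hq0, hq⟩, rfl⟩ :=
    mem_closure_iff.1 (A.mem_closure_ratCast_nonneg_ker hz0 hz) U hU hx0
  refine ⟨∑ i, q (.inl i) • s i, ?_, ?_, ?_⟩
  · rw [Ne, ← ratToReal_eq_zero_iff, ratToReal_sum_smul]
    exact hqU
  · exact sum_mem fun i _ => smul_mem_span_nnrat (hq0 _) (subset_span (hs i))
  · rw [hA q hq]
    exact sum_mem fun i _ => smul_mem_span_nnrat (hq0 _) (subset_span (ht i))

theorem zero_mem_rSpanQ {n : ℕ} (S : Set (Fin n → ℚ)) : 0 ∈ rSpanQ S :=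
  ⟨0, Fin.elim0, Fin.elim0, (·.elim0), (·.elim0), by simp⟩

theorem ratToReal_mem_rSpanQ {n : ℕ} {S : Set (Fin n → ℚ)} {x : Fin n → ℚ}
    (hx : x ∈ zSpanQ S) : ratToReal x ∈ rSpanQ S := by
  obtain ⟨k, a, s, hs, rfl⟩ := hx
  exact ⟨k, fun i => a i, s, hs, fun i => by positivity, by simp [ratToReal_sum_smul]⟩

theorem stmt4_general (n : ℕ) (S T : Set (Fin n → ℚ)) :
    (zSpanQ S ∩ zSpanQ T).Finite ↔ rSpanQ S ∩ rSpanQ T = {0} := by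
  constructor
  · intro hfin
    refine Set.Subset.antisymm (fun x ⟨hxS, hxT⟩ => ?_)
      (Set.singleton_subset_iff.2 ⟨zero_mem_rSpanQ S, zero_mem_rSpanQ T⟩)
    by_contra hx0
    obtain ⟨y, hy0, hyS, hyT⟩ := exists_ne_zero_mem_span_nnrat_of_mem_rSpanQ hxS hxT hx0
    refine infinite_span_nat_inter_of_mem_span_nnrat hy0 hyS hyT ?_
    simpa [zSpanQ_eq_span_nat] using hfin
  · intro h
    refine (Set.finite_singleton 0).subset fun x hx => ?_
    have : ratToReal x ∈ rSpanQ S ∩ rSpanQ T :=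
      ⟨ratToReal_mem_rSpanQ hx.1, ratToReal_mem_rSpanQ hx.2⟩
    rwa [h, Set.mem_singleton_iff, ratToReal_eq_zero_iff] at this

/-- For finite sets `S, T ⊆ ℚ^n`, the intersection of the ℤ≥0-spans is finite
iff the ℝ≥0-spans (inside `ℝ^n`) intersect only in `0`. -/
theorem stmt4 (n : ℕ) (hn : 0 < n) (S T : Set (Fin n → ℚ)) (hS : S.Finite) (hT : T.Finite) :
    (zSpanQ S ∩ zSpanQ T).Finite ↔ rSpanQ S ∩ rSpanQ T = {0} :=
  stmt4_general n S T
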